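/- arXiv:1509.06592 — 2 statements merged into one kernel-verified Lean document; each statement's English description precedes it below -/
import Mathlib

section
/- Let w_x, w_y, w_z : ℝ → ℝ be given functions and let ξ : ℝ → ℂ be differentiable with ξ(t) ≠ 0 for every t, satisfying for every t the complex Riccati equation ξ'(t) = ((w_y(t) + i·w_x(t))/2)·ξ(t)² − i·w_z(t)·ξ(t) + (w_y(t) − i·w_x(t))/2. Then the function η : ℝ → ℂ defined by η(t) = −(conj ξ(t))⁻¹ is differentiable and satisfies the same Riccati equation: for every t, η'(t) = ((w_y(t) + i·w_x(t))/2)·η(t)² − i·w_z(t)·η(t) + (w_y(t) − i·w_x(t))/2. -/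
/-!
The map `z ↦ -(conj z)⁻¹` is the antipodal map of the Riemann sphere. Differentiating
`η = -(conj ξ)⁻¹` gives `η' = conj ξ' / (conj ξ)²`, and a direct computation shows that the
Riccati vector field `R(z) = α z² - i w_z z + conj α`, with `α = (w_y + i w_x)/2` and `w_z` real,
satisfies `conj (R ξ) / (conj ξ)² = R (-(conj ξ)⁻¹)`.
-/

open ComplexConjugate

noncomputable def riccatiField (wx wy wz : ℝ) (z : ℂ) : ℂ :=
  ((wy + Complex.I * wx) / 2) * z ^ 2 - Complex.I * wz * z + (wy - Complex.I * wx) / 2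

theorem conj_riccatiField_div_sq (wx wy wz : ℝ) {z : ℂ} (hz : z ≠ 0) :
    conj (riccatiField wx wy wz z) / conj z ^ 2 = riccatiField wx wy wz (-(conj z)⁻¹) := by
  have hz' : conj z ≠ 0 := (map_ne_zero _).mpr hz
  simp only [riccatiField, map_add, map_sub, map_mul, map_div₀, map_pow, map_ofNat,
    Complex.conj_I, Complex.conj_ofReal]
  field_simp
  ring

theorem HasDerivAt.neg_conj_inv {f : ℝ → ℂ} {f' : ℂ} {t : ℝ} (hf : HasDerivAt f f' t)
    (ht : f t ≠ 0) :
    HasDerivAt (fun s => -(conj (f s))⁻¹) (conj f' / conj (f t) ^ 2) t := by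
  have h := (hf.star.inv (star_ne_zero.mpr ht)).neg
  rw [neg_div, neg_neg] at h
  exact h

/-- If `ξ : ℝ → ℂ` is differentiable, nonvanishing, and satisfies the complex Riccati
equation (2.5), then `η = -(conj ξ)⁻¹` is differentiable and satisfies the same
Riccati equation. -/
theorem riccati_conjugate_inverse_solution
    (wx wy wz : ℝ → ℝ) (ξ : ℝ → ℂ)
    (hξdiff : Differentiable ℝ ξ)
    (hξne : ∀ t, ξ t ≠ 0)
    (hξric : ∀ t, deriv ξ t =
      (((wy t : ℂ) + Complex.I * (wx t : ℂ)) / 2) * (ξ t) ^ 2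
        - Complex.I * (wz t : ℂ) * ξ t
        + ((wy t : ℂ) - Complex.I * (wx t : ℂ)) / 2)
    (η : ℝ → ℂ)
    (hη : ∀ t, η t = -((starRingEnd ℂ) (ξ t))⁻¹) :
    Differentiable ℝ η ∧ ∀ t, deriv η t =
      (((wy t : ℂ) + Complex.I * (wx t : ℂ)) / 2) * (η t) ^ 2
        - Complex.I * (wz t : ℂ) * η t
        + ((wy t : ℂ) - Complex.I * (wx t : ℂ)) / 2 := by
  obtain rfl : η = fun t => -(conj (ξ t))⁻¹ := funext hη
  have hderiv : ∀ t, HasDerivAt (fun s => -(conj (ξ s))⁻¹) (conj (deriv ξ t) / conj (ξ t) ^ 2) t :=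
    fun t => (hξdiff t).hasDerivAt.neg_conj_inv (hξne t)
  refine ⟨fun t => (hderiv t).differentiableAt, fun t => ?_⟩
  rw [(hderiv t).deriv, hξric t]
  exact conj_riccatiField_div_sq (wx t) (wy t) (wz t) (hξne t)
end

section
/- Let w_x, w_y, w_z : ℝ → ℝ be given, let γ be a real constant, and let a, b : ℝ → ℝ be differentiable functions satisfying for every t the real system a' = (w_y/2)·a² − (w_x·b)·a − (w_y/2)·(b² − 1) + w_z·b and b' = −(w_x/2)·b² + (w_y·a)·b + (w_x/2)·(a² − 1) − w_z·a. Define U = −γ·2a/(1 + a² + b²), V = −γ·2b/(1 + a² + b²), W = γ·(1 − (a² + b²))/(1 + a² + b²). Then U, V, W are differentiable and satisfy at every t the linear system U' = V·w_z − W·w_y, V' = W·w_x − U·w_z, W' = U·w_y − V·w_x. -/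
/-!
The map `(a, b) ↦ (2a, 2b, 1 - a² - b²) / (1 + a² + b²)` is inverse stereographic projection
onto the unit sphere, and the Riccati system (3.5) corresponds under it to the rigid
rotation `n' = (w_x, w_y, -w_z) × n`. Hence the image point `n` rotates, and so does
`(U, V, W) = γ (-n₁, -n₂, n₃)`, which is the linear system (2.2). Pointwise this is the
quotient rule followed by a polynomial identity in `a, b, w_x, w_y, w_z`.
-/

noncomputable section

def riccatiA (wx wy wz a b : ℝ) : ℝ :=
  wy / 2 * a ^ 2 - wx * b * a - wy / 2 * (b ^ 2 - 1) + wz * b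

def riccatiB (wx wy wz a b : ℝ) : ℝ :=
  -(wx / 2) * b ^ 2 + wy * a * b + wx / 2 * (a ^ 2 - 1) - wz * a

def invStereoX (a b : ℝ) : ℝ := 2 * a / (1 + a ^ 2 + b ^ 2)

def invStereoY (a b : ℝ) : ℝ := 2 * b / (1 + a ^ 2 + b ^ 2)

def invStereoZ (a b : ℝ) : ℝ := (1 - (a ^ 2 + b ^ 2)) / (1 + a ^ 2 + b ^ 2)

end

section InvStereoDeriv

variable {a b : ℝ → ℝ} {t a' b' : ℝ}

theorem one_add_sq_add_sq_ne_zero (x y : ℝ) : 1 + x ^ 2 + y ^ 2 ≠ 0 := by positivity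

theorem HasDerivAt.one_add_sq_add_sq (ha : HasDerivAt a a' t) (hb : HasDerivAt b b' t) :
    HasDerivAt (fun s => 1 + a s ^ 2 + b s ^ 2) (2 * a t * a' + 2 * b t * b') t :=
  (((ha.fun_pow 2).const_add 1).fun_add (hb.fun_pow 2)).congr_deriv (by norm_num)

theorem HasDerivAt.div_one_add_sq_add_sq {f : ℝ → ℝ} {f' : ℝ} (hf : HasDerivAt f f' t)
    (ha : HasDerivAt a a' t) (hb : HasDerivAt b b' t) :
    HasDerivAt (fun s => f s / (1 + a s ^ 2 + b s ^ 2))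
      ((f' * (1 + a t ^ 2 + b t ^ 2) - f t * (2 * a t * a' + 2 * b t * b'))
        / (1 + a t ^ 2 + b t ^ 2) ^ 2) t :=
  hf.div (ha.one_add_sq_add_sq hb) (one_add_sq_add_sq_ne_zero _ _)

variable {wx wy wz : ℝ}

theorem hasDerivAt_invStereoX_of_riccati
    (ha : HasDerivAt a (riccatiA wx wy wz (a t) (b t)) t)
    (hb : HasDerivAt b (riccatiB wx wy wz (a t) (b t)) t) :
    HasDerivAt (fun s => invStereoX (a s) (b s))
      (invStereoY (a t) (b t) * wz + invStereoZ (a t) (b t) * wy) t := by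
  refine ((ha.const_mul 2).div_one_add_sq_add_sq ha hb).congr_deriv ?_
  simp only [riccatiA, riccatiB, invStereoY, invStereoZ]
  field_simp
  ring

theorem hasDerivAt_invStereoY_of_riccati
    (ha : HasDerivAt a (riccatiA wx wy wz (a t) (b t)) t)
    (hb : HasDerivAt b (riccatiB wx wy wz (a t) (b t)) t) :
    HasDerivAt (fun s => invStereoY (a s) (b s))
      (-(invStereoZ (a t) (b t) * wx) - invStereoX (a t) (b t) * wz) t := by
  refine ((hb.const_mul 2).div_one_add_sq_add_sq ha hb).congr_deriv ?_
  simp only [riccatiA, riccatiB, invStereoX, invStereoZ]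
  field_simp
  ring

theorem hasDerivAt_invStereoZ_of_riccati
    (ha : HasDerivAt a (riccatiA wx wy wz (a t) (b t)) t)
    (hb : HasDerivAt b (riccatiB wx wy wz (a t) (b t)) t) :
    HasDerivAt (fun s => invStereoZ (a s) (b s))
      (invStereoY (a t) (b t) * wx - invStereoX (a t) (b t) * wy) t := by
  have hnum : HasDerivAt (fun s => 1 - (a s ^ 2 + b s ^ 2))
      (-(2 * a t * riccatiA wx wy wz (a t) (b t) + 2 * b t * riccatiB wx wy wz (a t) (b t))) t :=
    (((ha.fun_pow 2).fun_add (hb.fun_pow 2)).const_sub 1).congr_deriv (by norm_num)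
  refine (hnum.div_one_add_sq_add_sq ha hb).congr_deriv ?_
  simp only [riccatiA, riccatiB, invStereoX, invStereoY]
  field_simp
  ring

end InvStereoDeriv

/-- If `(a, b)` solve the real system (3.5), then the components `U, V, W` defined by
(3.3) with a real constant `γ` are differentiable and solve the linear system (2.2). -/
theorem velocity_components_solve_linear_system
    (wx wy wz : ℝ → ℝ) (γ : ℝ) (a b : ℝ → ℝ)
    (ha : Differentiable ℝ a) (hb : Differentiable ℝ b)
    (hsys : ∀ t,
      deriv a t = (wy t / 2) * (a t) ^ 2 - (wx t * b t) * a t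
          - (wy t / 2) * ((b t) ^ 2 - 1) + wz t * b t ∧
      deriv b t = -(wx t / 2) * (b t) ^ 2 + (wy t * a t) * b t
          + (wx t / 2) * ((a t) ^ 2 - 1) - wz t * a t)
    (U V W : ℝ → ℝ)
    (hU : ∀ t, U t = -γ * (2 * a t / (1 + (a t) ^ 2 + (b t) ^ 2)))
    (hV : ∀ t, V t = -γ * (2 * b t / (1 + (a t) ^ 2 + (b t) ^ 2)))
    (hW : ∀ t, W t = γ * ((1 - ((a t) ^ 2 + (b t) ^ 2)) / (1 + (a t) ^ 2 + (b t) ^ 2))) :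
    (Differentiable ℝ U ∧ Differentiable ℝ V ∧ Differentiable ℝ W) ∧
    ∀ t,
      deriv U t = V t * wz t - W t * wy t ∧
      deriv V t = W t * wx t - U t * wz t ∧
      deriv W t = U t * wy t - V t * wx t := by
  have hda (t : ℝ) : HasDerivAt a (riccatiA (wx t) (wy t) (wz t) (a t) (b t)) t :=
    (ha t).hasDerivAt.congr_deriv (hsys t).1
  have hdb (t : ℝ) : HasDerivAt b (riccatiB (wx t) (wy t) (wz t) (a t) (b t)) t :=
    (hb t).hasDerivAt.congr_deriv (hsys t).2
  obtain rfl : U = fun t => -γ * invStereoX (a t) (b t) := funext hU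
  obtain rfl : V = fun t => -γ * invStereoY (a t) (b t) := funext hV
  obtain rfl : W = fun t => γ * invStereoZ (a t) (b t) := funext hW
  have hU' (t : ℝ) := (hasDerivAt_invStereoX_of_riccati (hda t) (hdb t)).const_mul (-γ)
  have hV' (t : ℝ) := (hasDerivAt_invStereoY_of_riccati (hda t) (hdb t)).const_mul (-γ)
  have hW' (t : ℝ) := (hasDerivAt_invStereoZ_of_riccati (hda t) (hdb t)).const_mul γ
  refine ⟨⟨fun t => (hU' t).differentiableAt, fun t => (hV' t).differentiableAt,
    fun t => (hW' t).differentiableAt⟩, fun t => ⟨?_, ?_, ?_⟩⟩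
  · rw [(hU' t).deriv]; ring
  · rw [(hV' t).deriv]; ring
  · rw [(hW' t).deriv]; ring
end
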